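/- arXiv:2008.08240 — 3 statements merged into one kernel-verified Lean document; each statement's English description precedes it below -/
import Mathlib

section
/- Let f be a probability density on ℝ that is symmetric about μ and strictly unimodal about μ, and let a > 0 and m ∈ ℝ. Let X be the random variable with the truncated density g(x) = f(x) / P_f([m−a, m+a]) for x ∈ [m−a, m+a] and g(x) = 0 otherwise (where P_f([m−a, m+a]) = ∫_{m−a}^{m+a} f(x) dx > 0). Then for every m ≠ μ one has (E[X] − m)(μ − m) > 0; that is, if m < μ then E[X] > m, and if m > μ then E[X] < m. -/
/-!
Centring at `m`, the sign of `E[X] - m` is that of `∫_{m-a}^{m+a} (x - m) f(x) dx`, and folding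
the interval at `m` turns this into `∫_0^a t (f(m+t) - f(m-t)) dt`. By symmetry and strict
unimodality `f` strictly decreases with the distance to `μ`, and `m + t` is closer to `μ` than
`m - t` exactly when `m < μ`, so the integrand has the sign of `μ - m` for every `t > 0`.
-/

open MeasureTheory

theorem Set.zero_mem_uIcc_neg_self {α : Type*} [AddCommGroup α] [LinearOrder α]
    [IsOrderedAddMonoid α] (a : α) : (0 : α) ∈ Set.uIcc (-a) a := by
  rcases le_total 0 a with h | h
  · exact Set.mem_uIcc.2 (Or.inl ⟨neg_nonpos.2 h, h⟩)
  · exact Set.mem_uIcc.2 (Or.inr ⟨h, neg_nonneg.2 h⟩)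

theorem intervalIntegral.integral_neg_self_eq_integral_add_comp_neg {E : Type*}
    [NormedAddCommGroup E] [NormedSpace ℝ E] {f : ℝ → E} {a : ℝ}
    (hf : IntervalIntegrable f volume (-a) a) :
    ∫ x in -a..a, f x = ∫ x in 0..a, (f x + f (-x)) := by
  have hleft : IntervalIntegrable f volume (-a) 0 :=
    hf.mono_set (Set.uIcc_subset_uIcc_left (Set.zero_mem_uIcc_neg_self a))
  have hright : IntervalIntegrable f volume 0 a :=
    hf.mono_set (Set.uIcc_subset_uIcc_right (Set.zero_mem_uIcc_neg_self a))
  have hreflect : IntervalIntegrable (fun x ↦ f (-x)) volume 0 a := by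
    simpa using ((IntervalIntegrable.iff_comp_neg (f := f)).mp hleft).symm
  rw [intervalIntegral.integral_add hright hreflect, intervalIntegral.integral_comp_neg, neg_zero,
    add_comm, intervalIntegral.integral_add_adjacent_intervals hleft hright]

theorem intervalIntegral.integral_sub_mul_eq_integral_mul_sub {g : ℝ → ℝ} {m a : ℝ}
    (hg : IntervalIntegrable g volume (m - a) (m + a)) :
    ∫ x in (m - a)..(m + a), (x - m) * g x = ∫ t in 0..a, t * (g (m + t) - g (m - t)) := by
  have hmoment : IntervalIntegrable (fun x ↦ (x - m) * g x) volume (m - a) (m + a) :=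
    hg.continuousOn_mul (by fun_prop)
  have hshift : IntervalIntegrable (fun t ↦ t * g (m + t)) volume (-a) a := by
    simpa using hmoment.comp_add_left m
  have hsubst :=
    intervalIntegral.integral_comp_add_left (fun x ↦ (x - m) * g x) m (a := -a) (b := a)
  simp only [add_sub_cancel_left, ← sub_eq_add_neg] at hsubst
  rw [← hsubst, intervalIntegral.integral_neg_self_eq_integral_add_comp_neg hshift]
  congr 1 with t
  rw [← sub_eq_add_neg]
  ring

theorem apply_sub_abs_sub_eq {f : ℝ → ℝ} {μ : ℝ} (hf_symm : ∀ y, f (μ + y) = f (μ - y)) (y : ℝ) :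
    f (μ - |y - μ|) = f y := by
  rcases le_total μ y with h | h
  · rw [abs_of_nonneg (sub_nonneg.2 h), ← hf_symm, add_sub_cancel]
  · rw [abs_of_nonpos (sub_nonpos.2 h), sub_neg_eq_add, add_sub_cancel]

theorem lt_of_abs_sub_lt_abs_sub {f : ℝ → ℝ} {μ : ℝ} (hf_symm : ∀ y, f (μ + y) = f (μ - y))
    (hf_incr : ∀ x₁ x₂ : ℝ, x₁ < x₂ → x₂ ≤ μ → f x₁ < f x₂) {x y : ℝ}
    (h : |x - μ| < |y - μ|) : f y < f x := by
  rw [← apply_sub_abs_sub_eq hf_symm x, ← apply_sub_abs_sub_eq hf_symm y]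
  exact hf_incr _ _ (by linarith) (by linarith [abs_nonneg (x - μ)])

theorem apply_add_sub_apply_sub_mul_pos {f : ℝ → ℝ} {μ : ℝ} (hf_symm : ∀ y, f (μ + y) = f (μ - y))
    (hf_incr : ∀ x₁ x₂ : ℝ, x₁ < x₂ → x₂ ≤ μ → f x₁ < f x₂) {m t : ℝ} (hm : m ≠ μ) (ht : 0 < t) :
    0 < (f (m + t) - f (m - t)) * (μ - m) := by
  rcases hm.lt_or_gt with hlt | hgt
  · have : f (m - t) < f (m + t) :=
      lt_of_abs_sub_lt_abs_sub hf_symm hf_incr (sq_lt_sq.mp (by nlinarith))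
    nlinarith
  · have : f (m + t) < f (m - t) :=
      lt_of_abs_sub_lt_abs_sub hf_symm hf_incr (sq_lt_sq.mp (by nlinarith))
    nlinarith

theorem integral_sub_mul_mul_sub_pos {f : ℝ → ℝ} {μ : ℝ} (hf_symm : ∀ y, f (μ + y) = f (μ - y))
    (hf_incr : ∀ x₁ x₂ : ℝ, x₁ < x₂ → x₂ ≤ μ → f x₁ < f x₂) {m a : ℝ} (hm : m ≠ μ) (ha : 0 < a)
    (hf : IntervalIntegrable f volume (m - a) (m + a)) :
    0 < (∫ x in (m - a)..(m + a), (x - m) * f x) * (μ - m) := by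
  have hright : IntervalIntegrable (fun t ↦ f (m + t)) volume (-a) a := by
    simpa using hf.comp_add_left m
  have hleft : IntervalIntegrable (fun t ↦ f (m - t)) volume (-a) a := by
    simpa using (hf.comp_sub_left m).symm
  have hodd : IntervalIntegrable (fun t ↦ t * (f (m + t) - f (m - t))) volume 0 a :=
    ((hright.sub hleft).continuousOn_mul (by fun_prop)).mono_set
      (Set.uIcc_subset_uIcc_right (Set.zero_mem_uIcc_neg_self a))
  rw [intervalIntegral.integral_sub_mul_eq_integral_mul_sub hf,
    ← intervalIntegral.integral_mul_const]
  refine intervalIntegral.intervalIntegral_pos_of_pos_on (hodd.mul_const _) (fun t ht ↦ ?_) ha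
  rw [mul_assoc]
  exact mul_pos ht.1 (apply_add_sub_apply_sub_mul_pos hf_symm hf_incr hm ht.1)

theorem truncated_mean_towards_mode_general
    (f : ℝ → ℝ) (μ : ℝ)
    (hf_int : Integrable f)
    (hf_symm : ∀ y : ℝ, f (μ + y) = f (μ - y))
    (hf_incr : ∀ x₁ x₂ : ℝ, x₁ < x₂ → x₂ ≤ μ → f x₁ < f x₂)
    (a m : ℝ) (ha : 0 < a)
    (hP : 0 < ∫ x in Set.Icc (m - a) (m + a), f x)
    (hm : m ≠ μ) :
    ((∫ x in Set.Icc (m - a) (m + a), x * f x) /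
        (∫ x in Set.Icc (m - a) (m + a), f x) - m) * (μ - m) > 0 := by
  have hIcc (g : ℝ → ℝ) : ∫ x in Set.Icc (m - a) (m + a), g x = ∫ x in (m - a)..(m + a), g x := by
    rw [intervalIntegral.integral_of_le (by linarith), integral_Icc_eq_integral_Ioc]
  rw [hIcc, hIcc]
  rw [hIcc] at hP
  have hf : IntervalIntegrable f volume (m - a) (m + a) := hf_int.intervalIntegrable
  have hcentre : ∫ x in (m - a)..(m + a), (x - m) * f x
      = (∫ x in (m - a)..(m + a), x * f x) - m * ∫ x in (m - a)..(m + a), f x := by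
    simp only [sub_mul]
    rw [intervalIntegral.integral_sub (hf.continuousOn_mul (by fun_prop)) (hf.const_mul m),
      intervalIntegral.integral_const_mul]
  have hmean : (∫ x in (m - a)..(m + a), x * f x) / (∫ x in (m - a)..(m + a), f x) - m
      = (∫ x in (m - a)..(m + a), (x - m) * f x) / ∫ x in (m - a)..(m + a), f x := by
    rw [hcentre]
    field_simp
  rw [hmean, div_mul_eq_mul_div, gt_iff_lt]
  exact div_pos (integral_sub_mul_mul_sub_pos hf_symm hf_incr hm ha hf) hP

/-- **Truncated mean of a symmetric strictly unimodal density.**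
If `f` is a probability density on `ℝ`, symmetric about `μ` and strictly
unimodal about `μ`, and `X` has the density `f` truncated to `[m-a, m+a]`
(with positive mass there), then `(E[X] - m) * (μ - m) > 0` for every `m ≠ μ`. -/
theorem truncated_mean_towards_mode
    (f : ℝ → ℝ) (μ : ℝ)
    (hf_nonneg : ∀ x, 0 ≤ f x)
    (hf_int : Integrable f)
    (hf_mass : ∫ x, f x = 1)
    (hf_symm : ∀ y : ℝ, f (μ + y) = f (μ - y))
    (hf_incr : ∀ x₁ x₂ : ℝ, x₁ < x₂ → x₂ ≤ μ → f x₁ < f x₂)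
    (hf_decr : ∀ x₁ x₂ : ℝ, μ ≤ x₁ → x₁ < x₂ → f x₂ < f x₁)
    (a m : ℝ) (ha : 0 < a)
    (hP : 0 < ∫ x in Set.Icc (m - a) (m + a), f x)
    (hm : m ≠ μ) :
    ((∫ x in Set.Icc (m - a) (m + a), x * f x) /
        (∫ x in Set.Icc (m - a) (m + a), f x) - m) * (μ - m) > 0 :=
  truncated_mean_towards_mode_general f μ hf_int hf_symm hf_incr a m ha hP hm
end

section
/- Let C be a cost function assigning a real number C(a, b) to each pair of integers 1 ≤ a ≤ b, satisfying the superadditivity condition C(a, c) ≥ C(a, b) + C(b+1, c) for all a ≤ b < c. Let F : ℕ → ℝ be any function and β ∈ ℝ. If for some integers s < t one has F(s) + C(s+1, t) ≥ F(t), then for every t' > t, F(t) + C(t+1, t') + β ≤ F(s) + C(s+1, t') + β; consequently the candidate s can never yield a strictly lower cost than t as the last changepoint before any future time t', and can be pruned from the search. -/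
/-- **PELT-type pruning is safe.**
If the segment cost `C` is superadditive, `C(a,c) ≥ C(a,b) + C(b+1,c)` for all
`1 ≤ a ≤ b < c`, and at some time `t > s` we have `F(s) + C(s+1,t) ≥ F(t)`,
then for every future time `t' > t` the candidate `t` is at least as good as
the candidate `s` as the last changepoint:
`F(t) + C(t+1,t') + β ≤ F(s) + C(s+1,t') + β`. -/
theorem pelt_pruning_safe
    (C : ℕ → ℕ → ℝ)
    (hC : ∀ a b c : ℕ, 1 ≤ a → a ≤ b → b < c → C a b + C (b + 1) c ≤ C a c)
    (F : ℕ → ℝ) (β : ℝ) (s t : ℕ) (hst : s < t)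
    (hprune : F t ≤ F s + C (s + 1) t) :
    ∀ t' : ℕ, t < t' → F t + C (t + 1) t' + β ≤ F s + C (s + 1) t' + β := by
  intro t' htt'
  have hsplit : C (s + 1) t + C (t + 1) t' ≤ C (s + 1) t' := hC (s + 1) t t' s.succ_pos hst htt'
  linarith
end

section
/- Let f be a probability density on ℝ that is symmetric about μ and strictly unimodal about μ. Fix w ∈ ℝ with w > μ, a > 0, and γ ∈ (0, 1], and let X be the random variable with density proportional to f restricted to the interval (w − a, w + a). Then E[w + γ(X − w)] < w; symmetrically, if w < μ then E[w + γ(X − w)] > w. In particular, an estimate updated by w ↦ w + γ(X − w) from an accepted point X truncated to a symmetric window around the current estimate moves in expectation strictly towards μ whenever w ≠ μ. -/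
/-!
Write `Z` and `M` for the mass and the first moment of `f` on the window `(w - a, w + a)`.
Substituting `x = w + t` and folding `[-a, 0]` onto `[0, a]` gives
`M - w Z = ∫₀ᵃ t (f (w + t) - f (w - t)) dt`. If `w > μ` then `w - t` is nearer to `μ` than
`w + t` (after reflecting it across `μ` when it lies below `μ`), so the integrand is negative
and the conditional mean `M / Z` lies below `w`; the update moves by `γ (M / Z - w)`.
-/

open MeasureTheory Set

theorem apply_add_lt_apply_sub_of_strictAntiOn {β : Type*} [Preorder β] {f : ℝ → β}
    {μ w t : ℝ} (hsymm : ∀ y, f (μ + y) = f (μ - y)) (hanti : StrictAntiOn f (Ici μ))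
    (hw : μ < w) (ht : 0 < t) : f (w + t) < f (w - t) := by
  rcases le_or_gt μ (w - t) with h | h
  · exact hanti h (show μ ≤ w + t by linarith) (by linarith)
  · -- `w - t` reflects across `μ` to a point of `[μ, w + t)`
    have hreflect : f (w - t) = f (μ + (μ - (w - t))) := by rw [hsymm, sub_sub_cancel]
    rw [hreflect]
    exact hanti (show μ ≤ μ + (μ - (w - t)) by linarith) (show μ ≤ w + t by linarith)
      (by linarith)

theorem apply_sub_lt_apply_add_of_strictMonoOn {β : Type*} [Preorder β] {f : ℝ → β}
    {μ w t : ℝ} (hsymm : ∀ y, f (μ + y) = f (μ - y)) (hmono : StrictMonoOn f (Iic μ))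
    (hw : w < μ) (ht : 0 < t) : f (w - t) < f (w + t) := by
  have hsymm_neg : ∀ y, f (-(-μ + y)) = f (-(-μ - y)) := fun y => by
    rw [neg_add, neg_neg, neg_sub', neg_neg, sub_neg_eq_add, hsymm]; ring_nf
  have hanti_neg : StrictAntiOn (fun x => f (-x)) (Ici (-μ)) := fun x hx y hy hxy =>
    hmono (show -y ≤ μ from neg_le.1 hy) (show -x ≤ μ from neg_le.1 hx) (neg_lt_neg hxy)
  convert apply_add_lt_apply_sub_of_strictAntiOn hsymm_neg hanti_neg (neg_lt_neg hw) ht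
    using 2 <;> ring

theorem pos_of_strictMonoOn_Iic_of_strictAntiOn_Ici {f : ℝ → ℝ} {μ : ℝ} (hf : ∀ x, 0 ≤ f x)
    (hmono : StrictMonoOn f (Iic μ)) (hanti : StrictAntiOn f (Ici μ)) (x : ℝ) : 0 < f x := by
  rcases le_or_gt x μ with h | h
  · exact (hf (x - 1)).trans_lt (hmono (show x - 1 ≤ μ by linarith) h (by linarith))
  · exact (hf (x + 1)).trans_lt (hanti h.le (show μ ≤ x + 1 by linarith) (by linarith))

theorem integral_id_mul_eq_integral_id_mul_sub_comp_neg {g : ℝ → ℝ} {a : ℝ}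
    (hg : IntervalIntegrable g volume (-a) a) :
    ∫ t in -a..a, t * g t = ∫ t in 0..a, t * (g t - g (-t)) := by
  have hF : IntervalIntegrable (fun t => t * g t) volume (-a) a :=
    hg.continuousOn_mul continuousOn_id
  have h0 : (0 : ℝ) ∈ uIcc (-a) a := by
    rcases le_total 0 a with h | h
    · exact mem_uIcc.2 (Or.inl ⟨by linarith, h⟩)
    · exact mem_uIcc.2 (Or.inr ⟨h, by linarith⟩)
  have hleft := hF.mono_set (uIcc_subset_uIcc_left h0)
  have hright := hF.mono_set (uIcc_subset_uIcc_right h0)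
  have hreflect : ∫ t in -a..0, t * g t = ∫ t in 0..a, -t * g (-t) := by
    simpa using (intervalIntegral.integral_comp_neg (a := 0) (b := a) (fun t => t * g t)).symm
  have hleft_reflect : IntervalIntegrable (fun t => -t * g (-t)) volume 0 a := by
    simpa using ((IntervalIntegrable.iff_comp_neg (by finiteness)).1 hleft).symm
  rw [← intervalIntegral.integral_add_adjacent_intervals hleft hright, hreflect,
    ← intervalIntegral.integral_add hleft_reflect hright]
  congr 1 with t
  ring

theorem integral_id_mul_pos_of_comp_neg_lt {g : ℝ → ℝ} {a : ℝ}
    (hg : IntervalIntegrable g volume (-a) a) (ha : 0 < a)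
    (hlt : ∀ t ∈ Ioo 0 a, g (-t) < g t) : 0 < ∫ t in -a..a, t * g t := by
  have hreflect : IntervalIntegrable (fun t => g (-t)) volume (-a) a := by
    simpa using ((IntervalIntegrable.iff_comp_neg (by finiteness)).1 hg).symm
  have h0 : (0 : ℝ) ∈ uIcc (-a) a := mem_uIcc.2 (Or.inl ⟨by linarith, ha.le⟩)
  rw [integral_id_mul_eq_integral_id_mul_sub_comp_neg hg]
  exact intervalIntegral.intervalIntegral_pos_of_pos_on
    (((hg.sub hreflect).mono_set (uIcc_subset_uIcc_right h0)).continuousOn_mul continuousOn_id)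
    (fun t ht => mul_pos ht.1 (sub_pos.2 (hlt t ht))) ha

theorem integral_id_mul_neg_of_lt_comp_neg {g : ℝ → ℝ} {a : ℝ}
    (hg : IntervalIntegrable g volume (-a) a) (ha : 0 < a)
    (hlt : ∀ t ∈ Ioo 0 a, g t < g (-t)) : ∫ t in -a..a, t * g t < 0 := by
  have := integral_id_mul_pos_of_comp_neg_lt hg.neg ha fun t ht => neg_lt_neg (hlt t ht)
  simpa [intervalIntegral.integral_neg] using this

theorem setIntegral_Ioo_mul_sub_mul_eq {f : ℝ → ℝ} {w a : ℝ}
    (hf : IntervalIntegrable f volume (w - a) (w + a)) (ha : 0 ≤ a) :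
    (∫ x in Ioo (w - a) (w + a), x * f x) - w * ∫ x in Ioo (w - a) (w + a), f x
      = ∫ t in -a..a, t * f (w + t) := by
  have hwa : w - a ≤ w + a := by linarith
  rw [← integral_Ioc_eq_integral_Ioo, ← integral_Ioc_eq_integral_Ioo,
    ← intervalIntegral.integral_of_le hwa, ← intervalIntegral.integral_of_le hwa,
    ← intervalIntegral.integral_const_mul,
    ← intervalIntegral.integral_sub (hf.continuousOn_mul (g := fun x => x) continuousOn_id)
      (hf.const_mul w)]
  have hshift := intervalIntegral.integral_comp_add_left (a := -a) (b := a)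
    (fun x => (x - w) * f x) w
  simp only [add_sub_cancel_left, ← sub_eq_add_neg] at hshift
  rw [hshift]
  congr 1 with x
  ring

theorem update_moves_towards_mode_general
    (f : ℝ → ℝ) (μ : ℝ)
    (hf_nonneg : ∀ x, 0 ≤ f x)
    (hf_int : Integrable f)
    (hf_symm : ∀ y : ℝ, f (μ + y) = f (μ - y))
    (hf_incr : ∀ x₁ x₂ : ℝ, x₁ < x₂ → x₂ ≤ μ → f x₁ < f x₂)
    (hf_decr : ∀ x₁ x₂ : ℝ, μ ≤ x₁ → x₁ < x₂ → f x₂ < f x₁)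
    (w a γ : ℝ) (ha : 0 < a) (hγ : γ ∈ Set.Ioc (0 : ℝ) 1) :
    (μ < w →
      w + γ * ((∫ x in Set.Ioo (w - a) (w + a), x * f x) /
          (∫ x in Set.Ioo (w - a) (w + a), f x) - w) < w) ∧
    (w < μ →
      w < w + γ * ((∫ x in Set.Ioo (w - a) (w + a), x * f x) /
          (∫ x in Set.Ioo (w - a) (w + a), f x) - w)) := by
  have hmono : StrictMonoOn f (Iic μ) := fun x₁ _ x₂ hx₂ h => hf_incr x₁ x₂ h hx₂
  have hanti : StrictAntiOn f (Ici μ) := fun x₁ hx₁ x₂ _ h => hf_decr x₁ x₂ hx₁ h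
  have hfi : IntervalIntegrable f volume (w - a) (w + a) := hf_int.intervalIntegrable
  have hshift : IntervalIntegrable (fun t => f (w + t)) volume (-a) a := by
    simpa using hfi.comp_add_left w
  have hmoment := setIntegral_Ioo_mul_sub_mul_eq hfi ha.le
  have hmass : 0 < ∫ x in Ioo (w - a) (w + a), f x := by
    rw [← integral_Ioc_eq_integral_Ioo, ← intervalIntegral.integral_of_le (by linarith)]
    exact intervalIntegral.intervalIntegral_pos_of_pos hfi
      (pos_of_strictMonoOn_Iic_of_strictAntiOn_Ici hf_nonneg hmono hanti) (by linarith)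
  set Z := ∫ x in Ioo (w - a) (w + a), f x
  set M := ∫ x in Ioo (w - a) (w + a), x * f x
  constructor
  · intro hw
    have hneg := integral_id_mul_neg_of_lt_comp_neg hshift ha fun t ht => by
      simpa [← sub_eq_add_neg] using apply_add_lt_apply_sub_of_strictAntiOn hf_symm hanti hw ht.1
    have hmean : M / Z - w < 0 := by rw [sub_neg, div_lt_iff₀ hmass]; linarith
    linarith [mul_neg_of_pos_of_neg hγ.1 hmean]
  · intro hw
    have hpos := integral_id_mul_pos_of_comp_neg_lt hshift ha fun t ht => by
      simpa [← sub_eq_add_neg] using apply_sub_lt_apply_add_of_strictMonoOn hf_symm hmono hw ht.1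
    have hmean : 0 < M / Z - w := by rw [sub_pos, lt_div_iff₀ hmass]; linarith
    linarith [mul_pos hγ.1 hmean]

/-- **The running-mean update moves in expectation towards the mode.**
Let `f` be a probability density on `ℝ`, symmetric and strictly unimodal about
`μ`, let `a > 0`, `γ ∈ (0, 1]`, and let `X` have density proportional to `f`
restricted to `(w - a, w + a)`. Then the updated estimate `w + γ(X - w)` moves
in expectation strictly towards `μ`: if `w > μ` then `E[w + γ(X - w)] < w`,
and if `w < μ` then `E[w + γ(X - w)] > w`. -/
theorem update_moves_towards_mode
    (f : ℝ → ℝ) (μ : ℝ)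
    (hf_nonneg : ∀ x, 0 ≤ f x)
    (hf_int : Integrable f)
    (hf_mass : ∫ x, f x = 1)
    (hf_symm : ∀ y : ℝ, f (μ + y) = f (μ - y))
    (hf_incr : ∀ x₁ x₂ : ℝ, x₁ < x₂ → x₂ ≤ μ → f x₁ < f x₂)
    (hf_decr : ∀ x₁ x₂ : ℝ, μ ≤ x₁ → x₁ < x₂ → f x₂ < f x₁)
    (w a γ : ℝ) (ha : 0 < a) (hγ : γ ∈ Set.Ioc (0 : ℝ) 1) :
    (μ < w →
      w + γ * ((∫ x in Set.Ioo (w - a) (w + a), x * f x) /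
          (∫ x in Set.Ioo (w - a) (w + a), f x) - w) < w) ∧
    (w < μ →
      w < w + γ * ((∫ x in Set.Ioo (w - a) (w + a), x * f x) /
          (∫ x in Set.Ioo (w - a) (w + a), f x) - w)) :=
  update_moves_towards_mode_general f μ hf_nonneg hf_int hf_symm hf_incr hf_decr w a γ ha hγ
end
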